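/- Under the RTT relations with the constant R-matrix in the case a₊=−a₋, the generators satisfy p² = −t², pt = −tp, q² = −s², qs = −sq; equivalently p̃² = t̃² = q̃² = s̃² = 0 where p̃=(p+t)/2, t̃=(p−t)/2, q̃=(q+s)/2, s̃=(q−s)/2. -/

import Mathlib

open Matrix

/-- The 9×9 exotic braid matrix with parameters `a₊, a₋, b₊, b₋, c₊, c₋`. -/
noncomputable def Rhat9 (ap am bp bm cp cm : ℝ) : Matrix (Fin 9) (Fin 9) ℝ :=
  !![ap,0,0,0,0,0,0,0,am;
     0,bp,0,0,0,0,0,bm,0;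
     0,0,ap,0,0,0,am,0,0;
     0,0,0,cp,0,cm,0,0,0;
     0,0,0,0,1,0,0,0,0;
     0,0,0,cm,0,cp,0,0,0;
     0,0,am,0,0,0,ap,0,0;
     0,bm,0,0,0,0,0,bp,0;
     am,0,0,0,0,0,0,0,ap]

/-- Lexicographic identification of `Fin 3 × Fin 3` with `Fin 9`. -/
def enc (p : Fin 3 × Fin 3) : Fin 9 :=
  ⟨3 * p.1.val + p.2.val, by have := p.1.isLt; have := p.2.isLt; omega⟩

/-- The braid matrix reindexed by pairs. -/
noncomputable def RhatP (ap am bp bm cp cm : ℝ) :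
    Matrix (Fin 3 × Fin 3) (Fin 3 × Fin 3) ℝ :=
  fun p q => Rhat9 ap am bp bm cp cm (enc p) (enc q)

/-- The flip permutation `P(e_i ⊗ e_j) = e_j ⊗ e_i`. -/
def Pflip : Matrix (Fin 3 × Fin 3) (Fin 3 × Fin 3) ℝ :=
  fun p q => if p.1 = q.2 ∧ p.2 = q.1 then 1 else 0

/-- The constant R-matrix `R = P·R̂`, with entries viewed in the ℝ-algebra `A`. -/
noncomputable def RmatA (A : Type*) [Ring A] [Algebra ℝ A] (ap am bp bm cp cm : ℝ) :
    Matrix (Fin 3 × Fin 3) (Fin 3 × Fin 3) A :=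
  (Pflip * RhatP ap am bp bm cp cm).map (algebraMap ℝ A)

/-- `T₁ = T ⊗ I₃` over the algebra `A`. -/
def T1 {A : Type*} [Ring A] (T : Matrix (Fin 3) (Fin 3) A) :
    Matrix (Fin 3 × Fin 3) (Fin 3 × Fin 3) A :=
  fun x y => if x.2 = y.2 then T x.1 y.1 else 0

/-- `T₂ = I₃ ⊗ T` over the algebra `A`. -/
def T2 {A : Type*} [Ring A] (T : Matrix (Fin 3) (Fin 3) A) :
    Matrix (Fin 3 × Fin 3) (Fin 3 × Fin 3) A :=
  fun x y => if x.1 = y.1 then T x.2 y.2 else 0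

/-! Only the `a₊, a₋` entries of `R̂` meet the entries `((0,0),(1,1))`, `((0,2),(1,1))`,
`((1,1),(0,0))`, `((1,1),(0,2))` of the RTT relation, so for arbitrary parameters they read
`a₊ p² + a₋ t² = p²`, `a₋ pt + a₊ tp = tp`, and likewise for `q, s`. With `a₊ = −a₋ = 1/2` these
become `p² = −t²`, `pt = −tp`, ..., and then `(p ± t)² = p² + t² ± (pt + tp) = 0`. -/

lemma Pflip_mul_apply (M : Matrix (Fin 3 × Fin 3) (Fin 3 × Fin 3) ℝ) (x y : Fin 3 × Fin 3) :
    (Pflip * M) x y = M x.swap y := by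
  rw [mul_apply, Finset.sum_eq_single x.swap]
  · simp [Pflip]
  · rintro z - hz
    rw [Pflip, if_neg (fun h => hz (Prod.ext h.2.symm h.1.symm)), zero_mul]
  · simp

section RTT

variable {A : Type*} [Ring A]

lemma RmatA_apply [Algebra ℝ A] (ap am bp bm cp cm : ℝ) (x y : Fin 3 × Fin 3) :
    RmatA A ap am bp bm cp cm x y = algebraMap ℝ A (RhatP ap am bp bm cp cm x.swap y) := by
  rw [RmatA, map_apply, Pflip_mul_apply]

lemma T1_mul_T2_apply (T : Matrix (Fin 3) (Fin 3) A) (x y : Fin 3 × Fin 3) :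
    (T1 T * T2 T) x y = T x.1 y.1 * T x.2 y.2 := by
  rw [mul_apply, Finset.sum_eq_single (y.1, x.2)] <;> aesop (add simp [T1, T2])

lemma T2_mul_T1_apply (T : Matrix (Fin 3) (Fin 3) A) (x y : Fin 3 × Fin 3) :
    (T2 T * T1 T) x y = T x.2 y.2 * T x.1 y.1 := by
  rw [mul_apply, Finset.sum_eq_single (x.1, y.2)] <;> aesop (add simp [T1, T2])

def IsRTT (R : Matrix (Fin 3 × Fin 3) (Fin 3 × Fin 3) A) (T : Matrix (Fin 3) (Fin 3) A) : Prop :=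
  R * T1 T * T2 T = T2 T * T1 T * R

lemma IsRTT.apply {R : Matrix (Fin 3 × Fin 3) (Fin 3 × Fin 3) A} {T : Matrix (Fin 3) (Fin 3) A}
    (h : IsRTT R T) (x y : Fin 3 × Fin 3) :
    ∑ z, R x z * (T z.1 y.1 * T z.2 y.2) = ∑ z, T x.2 z.2 * T x.1 z.1 * R z y := by
  have := congrFun (congrFun h x) y
  rw [Matrix.mul_assoc, mul_apply, mul_apply] at this
  simpa only [T1_mul_T2_apply, T2_mul_T1_apply] using this

variable [Algebra ℝ A] {ap am bp bm cp cm : ℝ} {k p l q r s m t n : A}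

lemma IsRTT.p_t_relations (h : IsRTT (RmatA A ap am bp bm cp cm) !![k,p,l;q,r,s;m,t,n]) :
    ap • (p * p) + am • (t * t) = p * p ∧
    am • (p * t) + ap • (t * p) = t * p := by
  constructor
  · simpa [Fintype.sum_prod_type, Fin.sum_univ_three, RmatA_apply, RhatP, Rhat9, enc,
      ← Algebra.smul_def] using h.apply (0, 0) (1, 1)
  · simpa [Fintype.sum_prod_type, Fin.sum_univ_three, RmatA_apply, RhatP, Rhat9, enc,
      ← Algebra.smul_def] using h.apply (0, 2) (1, 1)

lemma IsRTT.q_s_relations (h : IsRTT (RmatA A ap am bp bm cp cm) !![k,p,l;q,r,s;m,t,n]) :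
    q * q = ap • (q * q) + am • (s * s) ∧
    q * s = am • (s * q) + ap • (q * s) := by
  constructor
  · simpa [Fintype.sum_prod_type, Fin.sum_univ_three, RmatA_apply, RhatP, Rhat9, enc,
      ← Algebra.commutes, ← Algebra.smul_def] using h.apply (1, 1) (0, 0)
  · simpa [Fintype.sum_prod_type, Fin.sum_univ_three, RmatA_apply, RhatP, Rhat9, enc,
      ← Algebra.commutes, ← Algebra.smul_def] using h.apply (1, 1) (0, 2)

end RTT

lemma add_mul_self_eq_zero_and_sub_mul_self_eq_zero {R : Type*} [NonUnitalNonAssocRing R]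
    {x y : R} (hsq : x * x = -(y * y)) (hanti : x * y = -(y * x)) :
    (x + y) * (x + y) = 0 ∧ (x - y) * (x - y) = 0 := by
  constructor <;> simp only [add_mul, mul_add, sub_mul, mul_sub, hsq, hanti] <;> abel

theorem stmt8_general {A : Type*} [Ring A] [Algebra ℝ A] (k p l q r s m t n : A)
    (bm cm : ℝ)
    (hRTT : RmatA A (1/2) (-(1/2)) (1/2) bm (1/2) cm *
        T1 !![k,p,l;q,r,s;m,t,n] * T2 !![k,p,l;q,r,s;m,t,n] =
      T2 !![k,p,l;q,r,s;m,t,n] * T1 !![k,p,l;q,r,s;m,t,n] *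
        RmatA A (1/2) (-(1/2)) (1/2) bm (1/2) cm) :
    (p * p = -(t * t) ∧ p * t = -(t * p) ∧ q * q = -(s * s) ∧ q * s = -(s * q)) ∧
    (((1/2 : ℝ) • (p + t)) * ((1/2 : ℝ) • (p + t)) = 0 ∧
     ((1/2 : ℝ) • (p - t)) * ((1/2 : ℝ) • (p - t)) = 0 ∧
     ((1/2 : ℝ) • (q + s)) * ((1/2 : ℝ) • (q + s)) = 0 ∧
     ((1/2 : ℝ) • (q - s)) * ((1/2 : ℝ) • (q - s)) = 0) := by
  obtain ⟨hpp, htp⟩ := IsRTT.p_t_relations hRTT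
  obtain ⟨hqq, hsq⟩ := IsRTT.q_s_relations hRTT
  have hp : p * p = -(t * t) := by linear_combination (norm := module) (-2 : ℝ) • hpp
  have hpt : p * t = -(t * p) := by linear_combination (norm := module) (-2 : ℝ) • htp
  have hq : q * q = -(s * s) := by linear_combination (norm := module) (2 : ℝ) • hqq
  have hqs : q * s = -(s * q) := by linear_combination (norm := module) (2 : ℝ) • hsq
  obtain ⟨hpt_add, hpt_sub⟩ := add_mul_self_eq_zero_and_sub_mul_self_eq_zero hp hpt
  obtain ⟨hqs_add, hqs_sub⟩ := add_mul_self_eq_zero_and_sub_mul_self_eq_zero hq hqs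
  refine ⟨⟨hp, hpt, hq, hqs⟩, ?_⟩
  simp only [smul_mul_smul_comm, hpt_add, hpt_sub, hqs_add, hqs_sub, smul_zero, and_self]

/-- RTT relations in the case `a₊ = −a₋` imply `p² = −t²`, `pt = −tp`, `q² = −s²`,
`qs = −sq`; equivalently `p̃² = t̃² = q̃² = s̃² = 0`. -/
theorem stmt8 {A : Type*} [Ring A] [Algebra ℝ A] (k p l q r s m t n : A)
    (bm cm : ℝ) (hb : bm = 1/2 ∨ bm = -(1/2)) (hc : cm = 1/2 ∨ cm = -(1/2))
    (hRTT : RmatA A (1/2) (-(1/2)) (1/2) bm (1/2) cm *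
        T1 !![k,p,l;q,r,s;m,t,n] * T2 !![k,p,l;q,r,s;m,t,n] =
      T2 !![k,p,l;q,r,s;m,t,n] * T1 !![k,p,l;q,r,s;m,t,n] *
        RmatA A (1/2) (-(1/2)) (1/2) bm (1/2) cm) :
    (p * p = -(t * t) ∧ p * t = -(t * p) ∧ q * q = -(s * s) ∧ q * s = -(s * q)) ∧
    (((1/2 : ℝ) • (p + t)) * ((1/2 : ℝ) • (p + t)) = 0 ∧
     ((1/2 : ℝ) • (p - t)) * ((1/2 : ℝ) • (p - t)) = 0 ∧
     ((1/2 : ℝ) • (q + s)) * ((1/2 : ℝ) • (q + s)) = 0 ∧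
     ((1/2 : ℝ) • (q - s)) * ((1/2 : ℝ) • (q - s)) = 0) :=
  stmt8_general k p l q r s m t n bm cm hRTT
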